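/- Let L = p^{-1}Z_p ⊕ Z_p ⊕ Z_p ⊕ Z_p ⊆ Q_p⁴ with the standard symplectic pairing. Call a primitive element x ∈ L (i.e. x ∉ pL) type (I) if ⟨x,y⟩ ∈ p^{-1}Z_p ∖ Z_p for some y ∈ L, and type (II) if ⟨x,y⟩ ∈ Z_p for all y ∈ L. If x ∈ L is primitive of type (I) and y ∈ L satisfies ⟨x,y⟩ ∈ Z_p, then there exists λ ∈ Z_p such that y − λx is not primitive of type (I). -/

import Mathlib

/-- The paramodular lattice `L = p⁻¹ℤ_p ⊕ ℤ_p ⊕ ℤ_p ⊕ ℤ_p ⊆ ℚ_p⁴` is identified with `ℤ_p⁴`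
via `(a,b,c,d) ↦ (p⁻¹a, b, c, d)`.  Under this identification the standard symplectic pairing
`⟨x,y⟩ = x₁y₄ + x₂y₃ − x₃y₂ − x₄y₁` becomes the following `ℚ_p`-valued pairing on `ℤ_p⁴`. -/
noncomputable def spPara (p : ℕ) [Fact p.Prime] (u v : Fin 4 → ℤ_[p]) : ℚ_[p] :=
  ((u 0 * v 3 : ℤ_[p]) : ℚ_[p]) / (p : ℚ_[p]) + ((u 1 * v 2 : ℤ_[p]) : ℚ_[p])
    - ((u 2 * v 1 : ℤ_[p]) : ℚ_[p]) - ((u 3 * v 0 : ℤ_[p]) : ℚ_[p]) / (p : ℚ_[p])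

/-- `x ∈ L` is primitive if `x ∉ pL`. -/
def ParaPrimitive (p : ℕ) [Fact p.Prime] (x : Fin 4 → ℤ_[p]) : Prop :=
  ¬ ∀ i, (p : ℤ_[p]) ∣ x i

/-- A primitive element of type (I): `⟨x,y⟩ ∈ p⁻¹ℤ_p ∖ ℤ_p` for some `y ∈ L`. -/
def PrimTypeI (p : ℕ) [Fact p.Prime] (x : Fin 4 → ℤ_[p]) : Prop :=
  ParaPrimitive p x ∧ ∃ y : Fin 4 → ℤ_[p], ¬ ‖spPara p x y‖ ≤ 1

/-- A primitive element of type (II): `⟨x,y⟩ ∈ ℤ_p` for every `y ∈ L`. -/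
def PrimTypeII (p : ℕ) [Fact p.Prime] (x : Fin 4 → ℤ_[p]) : Prop :=
  ParaPrimitive p x ∧ ∀ y : Fin 4 → ℤ_[p], ‖spPara p x y‖ ≤ 1

/-!
In the coordinates of `ℤ_p⁴`, `⟨u,v⟩ = (u₀v₃ − u₃v₀)/p + (u₁v₂ − u₂v₁)`, so by the ultrametric
inequality `⟨u,v⟩ ∈ ℤ_p` iff `p ∣ u₀v₃ − u₃v₀`. Hence an element of type (I) has `x₀` or `x₃` a
unit, and `⟨x,y⟩ ∈ ℤ_p` says that `(y₀,y₃)` is congruent mod `p` to a multiple `λ(x₀,x₃)`. Then both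
outer coordinates of `y − λx` are divisible by `p`, so `y − λx` pairs integrally with all of `L`.
-/

theorem IsUltrametricDist.norm_add_le_iff_of_norm_le {E : Type*} [SeminormedAddCommGroup E]
    [IsUltrametricDist E] {a b : E} {r : ℝ} (hb : ‖b‖ ≤ r) : ‖a + b‖ ≤ r ↔ ‖a‖ ≤ r := by
  refine ⟨fun h => ?_, fun h => (norm_add_le_max a b).trans (max_le h hb)⟩
  simpa using (norm_add_le_max (a + b) (-b)).trans (max_le h (by rwa [norm_neg]))

theorem PadicInt.norm_coe_div_p_le_one_iff {p : ℕ} [Fact p.Prime] (d : ℤ_[p]) :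
    ‖(d : ℚ_[p]) / p‖ ≤ 1 ↔ (p : ℤ_[p]) ∣ d := by
  have hp : (0 : ℝ) < p := by exact_mod_cast (Fact.out : p.Prime).pos
  rw [norm_div, Padic.norm_p, div_inv_eq_mul, ← PadicInt.norm_def, ← le_div_iff₀ hp, one_div,
    ← zpow_neg_one, PadicInt.norm_le_pow_iff_norm_lt_pow_add_one, neg_add_cancel, zpow_zero,
    PadicInt.norm_lt_one_iff_dvd]

theorem exists_dvd_sub_mul_of_isUnit {R : Type*} [CommRing R] {π a b c d : R} (ha : IsUnit a)
    (h : π ∣ a * d - b * c) : ∃ l, π ∣ c - l * a ∧ π ∣ d - l * b := by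
  obtain ⟨u, rfl⟩ := ha
  have hc : c - ↑u⁻¹ * c * u = 0 := by linear_combination (-c) * u.inv_mul
  have hd : d - ↑u⁻¹ * c * b = ↑u⁻¹ * (u * d - b * c) := by
    linear_combination (-d) * u.inv_mul
  exact ⟨↑u⁻¹ * c, hc ▸ dvd_zero π, hd ▸ dvd_mul_of_dvd_right h _⟩

theorem exists_dvd_sub_mul_of_isUnit_or_isUnit {R : Type*} [CommRing R] {π a b c d : R}
    (hab : IsUnit a ∨ IsUnit b) (h : π ∣ a * d - b * c) :
    ∃ l, π ∣ c - l * a ∧ π ∣ d - l * b := by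
  rcases hab with ha | hb
  · exact exists_dvd_sub_mul_of_isUnit ha h
  · obtain ⟨l, hd, hc⟩ := exists_dvd_sub_mul_of_isUnit hb (by simpa using h.neg_right)
    exact ⟨l, hc, hd⟩

section Paramodular

variable {p : ℕ} [Fact p.Prime]

theorem spPara_eq (u v : Fin 4 → ℤ_[p]) :
    spPara p u v = ((u 0 * v 3 - u 3 * v 0 : ℤ_[p]) : ℚ_[p]) / p
      + ((u 1 * v 2 - u 2 * v 1 : ℤ_[p]) : ℚ_[p]) := by
  simp only [spPara]
  push_cast
  ring

theorem norm_spPara_le_one_iff (u v : Fin 4 → ℤ_[p]) :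
    ‖spPara p u v‖ ≤ 1 ↔ (p : ℤ_[p]) ∣ u 0 * v 3 - u 3 * v 0 := by
  rw [spPara_eq, IsUltrametricDist.norm_add_le_iff_of_norm_le, PadicInt.norm_coe_div_p_le_one_iff]
  exact PadicInt.norm_def.symm.trans_le (PadicInt.norm_le_one _)

theorem not_primTypeI_of_dvd {w : Fin 4 → ℤ_[p]} (h0 : (p : ℤ_[p]) ∣ w 0)
    (h3 : (p : ℤ_[p]) ∣ w 3) : ¬ PrimTypeI p w := fun ⟨_, z, hz⟩ =>
  hz <| (norm_spPara_le_one_iff w z).2 <| dvd_sub (h0.mul_right _) (h3.mul_right _)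

theorem isUnit_or_isUnit_of_primTypeI {x : Fin 4 → ℤ_[p]} (hx : PrimTypeI p x) :
    IsUnit (x 0) ∨ IsUnit (x 3) := by
  by_contra h
  rw [not_or, PadicInt.not_isUnit_iff, PadicInt.not_isUnit_iff, PadicInt.norm_lt_one_iff_dvd,
    PadicInt.norm_lt_one_iff_dvd] at h
  exact not_primTypeI_of_dvd h.1 h.2 hx

end Paramodular

/-- If `x ∈ L` is primitive of type (I) and `y ∈ L` satisfies `⟨x,y⟩ ∈ ℤ_p`, then there
exists `λ ∈ ℤ_p` such that `y − λx` is not primitive of type (I). -/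
theorem typeI_pairing_integral_reduction
    (p : ℕ) [Fact p.Prime] (x y : Fin 4 → ℤ_[p])
    (hx : PrimTypeI p x) (hxy : ‖spPara p x y‖ ≤ 1) :
    ∃ lam : ℤ_[p], ¬ PrimTypeI p (y - lam • x) := by
  obtain ⟨lam, h0, h3⟩ := exists_dvd_sub_mul_of_isUnit_or_isUnit
    (isUnit_or_isUnit_of_primTypeI hx) ((norm_spPara_le_one_iff x y).1 hxy)
  exact ⟨lam, not_primTypeI_of_dvd h0 h3⟩
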